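/- For G-valued random variables X, Y, the entropic Ruzsa distance satisfies d[X;-Y] <= 3 d[X;Y]. -/

import Mathlib

open scoped BigOperators Pointwise
noncomputable section

/-- A finitely supported probability mass function. -/
def IsPMF {α : Type*} (p : α → ℝ) : Prop :=
  (∀ x, 0 ≤ p x) ∧ (Function.support p).Finite ∧ ∑ᶠ x, p x = 1

/-- Shannon entropy of a pmf. -/
def ent {α : Type*} (p : α → ℝ) : ℝ := ∑ᶠ x, -(p x * Real.log (p x))

/-- Convolution of pmfs: the distribution of the sum of independent random variables. -/
def conv {G : Type*} [AddCommGroup G] (p q : G → ℝ) : G → ℝ :=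
  fun z => ∑ᶠ x, p x * q (z - x)

/-- Distribution of the negation. -/
def negp {G : Type*} [AddCommGroup G] (p : G → ℝ) : G → ℝ := fun x => p (-x)

/-- Entropic Ruzsa distance between (the distributions of) two random variables. -/
def rdist {G : Type*} [AddCommGroup G] (p q : G → ℝ) : ℝ :=
  ent (conv p (negp q)) - ent p / 2 - ent q / 2

/-- Distribution of the sum of `n` iid copies. -/
def iterConv {G : Type*} [AddCommGroup G] (p : G → ℝ) : ℕ → G → ℝ
  | 0 => fun x => Set.indicator ({0} : Set G) (fun _ => (1 : ℝ)) x
  | n + 1 => conv (iterConv p n) p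

/-!
Every entropy inequality used is an instance of the submodularity of Shannon entropy: if the
outcome of `μ` is determined by the pair `(f, g)` and `k₁ ∘ f = k₂ ∘ g`, then
`H(μ) + H(k₁ ∘ f) ≤ H(f) + H(g)`, which follows from Gibbs' inequality. Under the law
`p ⊗ q ⊗ r` of independent `X, Y, Z` it gives `H(X) ≤ H(X + Y)`, the Kaimanovich–Vershik
inequality `H(X + Y + Z) + H(Y) ≤ H(X + Y) + H(Y + Z)` and the Ruzsa triangle inequality.
With `Y'` an independent copy of `Y`, `H(X + Y) ≤ H(X + Y - Y') ≤ H(X - Y') + H(Y - Y') - H(Y)`,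
that is `d[X;-Y] ≤ d[X;Y] + d[Y;Y] ≤ 3 d[X;Y]`.
-/

open Function Real Finset

section Law

variable {α β γ δ : Type*}

theorem IsPMF.nonneg {μ : α → ℝ} (hμ : IsPMF μ) (a : α) : 0 ≤ μ a := hμ.1 a

theorem IsPMF.support_finite {μ : α → ℝ} (hμ : IsPMF μ) : (support μ).Finite := hμ.2.1

theorem IsPMF.finsum_eq_one {μ : α → ℝ} (hμ : IsPMF μ) : ∑ᶠ a, μ a = 1 := hμ.2.2

theorem IsPMF.sum_eq_one {μ : α → ℝ} (hμ : IsPMF μ) {S : Finset α} (hS : support μ ⊆ S) :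
    ∑ a ∈ S, μ a = 1 := by
  rw [← finsum_eq_sum_of_support_subset μ hS]
  exact hμ.finsum_eq_one

theorem finsum_mul_eq_sum {μ : α → ℝ} {S : Finset α} (hS : support μ ⊆ S) (X : α → ℝ) :
    ∑ᶠ a, μ a * X a = ∑ a ∈ S, μ a * X a :=
  finsum_eq_sum_of_support_subset _ ((support_mul_subset_left _ _).trans hS)

theorem ent_eq_sum {μ : α → ℝ} {S : Finset α} (hS : support μ ⊆ S) :
    ent μ = ∑ a ∈ S, negMulLog (μ a) := by
  have h : ent μ = ∑ᶠ a, negMulLog (μ a) := by simp only [ent, negMulLog, neg_mul]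
  exact h.trans (finsum_eq_sum_of_support_subset (negMulLog ∘ μ)
    ((support_comp_subset negMulLog_zero μ).trans hS))

theorem ent_eq_neg_finsum {μ : α → ℝ} (hμ : (support μ).Finite) :
    ent μ = -∑ᶠ a, μ a * log (μ a) := by
  rw [ent_eq_sum (hμ.coe_toFinset.symm.subset), finsum_mul_eq_sum hμ.coe_toFinset.symm.subset]
  simp [negMulLog]

def law (μ : α → ℝ) (f : α → β) (b : β) : ℝ := ∑ᶠ a ∈ f ⁻¹' {b}, μ a

theorem law_apply_eq_sum [DecidableEq β] {μ : α → ℝ} {S : Finset α} (hS : support μ ⊆ S)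
    (f : α → β) (b : β) : law μ f b = ∑ a ∈ S with f a = b, μ a := by
  refine finsum_mem_eq_sum_of_inter_support_eq _ ?_
  ext a
  simp only [Set.mem_inter_iff, Set.mem_preimage, Set.mem_singleton_iff, coe_filter]
  exact ⟨fun h => ⟨⟨hS h.2, h.1⟩, h.2⟩, fun h => ⟨h.1.2, h.2⟩⟩

theorem support_law_subset [DecidableEq β] {μ : α → ℝ} {S : Finset α} (hS : support μ ⊆ S)
    (f : α → β) : support (law μ f) ⊆ S.image f := by
  intro b hb
  rw [mem_support, law_apply_eq_sum hS] at hb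
  obtain ⟨a, ha, -⟩ := exists_ne_zero_of_sum_ne_zero hb
  rw [mem_filter] at ha
  exact mem_image.mpr ⟨a, ha.1, ha.2⟩

theorem sum_law_mul [DecidableEq β] {μ : α → ℝ} {S : Finset α} (hS : support μ ⊆ S)
    (f : α → β) (L : β → ℝ) : ∑ b ∈ S.image f, law μ f b * L b = ∑ a ∈ S, μ a * L (f a) := by
  simp_rw [law_apply_eq_sum hS, sum_mul]
  rw [← sum_fiberwise_of_maps_to (fun a ha => mem_image_of_mem f ha)]
  refine sum_congr rfl fun b _ => sum_congr rfl fun a ha => ?_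
  rw [(mem_filter.mp ha).2]

theorem finite_support_law {μ : α → ℝ} (hμ : (support μ).Finite) (f : α → β) :
    (support (law μ f)).Finite := by
  classical
  exact (finite_toSet _).subset (support_law_subset (by simp : support μ ⊆ hμ.toFinset) f)

theorem finsum_law_mul {μ : α → ℝ} (hμ : (support μ).Finite) (f : α → β) (L : β → ℝ) :
    ∑ᶠ b, law μ f b * L b = ∑ᶠ a, μ a * L (f a) := by
  classical
  have hS : support μ ⊆ hμ.toFinset := by simp
  rw [finsum_mul_eq_sum (support_law_subset hS f), finsum_mul_eq_sum hS, sum_law_mul hS]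

theorem IsPMF.law {μ : α → ℝ} (hμ : IsPMF μ) (f : α → β) : IsPMF (law μ f) := by
  classical
  have hS : support μ ⊆ hμ.support_finite.toFinset := by simp
  refine ⟨fun b => ?_, finite_support_law hμ.support_finite f, ?_⟩
  · rw [law_apply_eq_sum hS]
    exact sum_nonneg fun a _ => hμ.nonneg a
  · simpa [hμ.finsum_eq_one] using finsum_law_mul hμ.support_finite f 1

theorem le_law_apply {μ : α → ℝ} (hμ : IsPMF μ) (f : α → β) (a : α) : μ a ≤ law μ f (f a) := by
  classical
  have hS : support μ ⊆ ↑(insert a hμ.support_finite.toFinset) := by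
    simp [Set.subset_insert]
  rw [law_apply_eq_sum hS]
  exact single_le_sum (fun a _ => hμ.nonneg a) (by simp)

theorem law_comp {μ : α → ℝ} (hμ : (support μ).Finite) (f : α → β) (g : β → γ) :
    law μ (g ∘ f) = law (law μ f) g := by
  classical
  have hS : support μ ⊆ hμ.toFinset := by simp
  ext c
  rw [law_apply_eq_sum hS, law_apply_eq_sum (support_law_subset hS f), sum_filter, sum_filter]
  simpa [mul_ite] using (sum_law_mul hS f fun b => if g b = c then 1 else 0).symm

theorem law_id (μ : α → ℝ) : law μ id = μ := by
  ext a
  simp [law]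

theorem law_equiv (μ : α → ℝ) (e : α ≃ β) : law μ e = μ ∘ e.symm := by
  ext b
  simp [law, ← Equiv.eq_symm_apply]

theorem ent_law {μ : α → ℝ} (hμ : (support μ).Finite) (f : α → β) :
    ent (law μ f) = -∑ᶠ a, μ a * log (law μ f (f a)) := by
  rw [ent_eq_neg_finsum (finite_support_law hμ f), finsum_law_mul hμ f]

theorem ent_law_const {μ : α → ℝ} (hμ : ∑ᶠ a, μ a = 1) : ent (law μ fun _ => ()) = 0 := by
  have h : law μ (fun _ => ()) () = 1 := by simpa [law] using hμ
  simp [ent, h]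

theorem ent_le_neg_finsum_mul_log {μ Q : α → ℝ} (hμ : IsPMF μ) (hQ : ∀ a, 0 < μ a → 0 < Q a)
    (hsum : ∑ᶠ a ∈ support μ, Q a ≤ 1) : ent μ ≤ -∑ᶠ a, μ a * log (Q a) := by
  set S := hμ.support_finite.toFinset
  have hS : support μ ⊆ S := by simp [S]
  rw [finsum_mem_eq_finite_toFinset_sum _ hμ.support_finite] at hsum
  rw [ent_eq_sum hS, finsum_mul_eq_sum hS]
  have hterm : ∀ a ∈ S, negMulLog (μ a) + μ a * log (Q a) ≤ Q a - μ a := by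
    intro a ha
    have hμa : 0 < μ a := (hμ.nonneg a).lt_of_ne' (by simpa [S] using ha)
    have hQa := hQ a hμa
    have hlog := log_le_sub_one_of_pos (div_pos hQa hμa)
    rw [log_div hQa.ne' hμa.ne'] at hlog
    calc negMulLog (μ a) + μ a * log (Q a) = μ a * (log (Q a) - log (μ a)) := by
          rw [negMulLog]; ring
      _ ≤ μ a * (Q a / μ a - 1) := mul_le_mul_of_nonneg_left hlog hμa.le
      _ = Q a - μ a := by field_simp
  have := sum_le_sum hterm
  rw [sum_add_distrib, sum_sub_distrib, hμ.sum_eq_one hS] at this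
  linarith

section Submodular

variable {μ : α → ℝ} {f : α → β} {g : α → γ} (k₁ : β → δ) (k₂ : γ → δ)

theorem finsum_law_mul_law_div_law_le_one (hμ : IsPMF μ) (hk : ∀ a, k₁ (f a) = k₂ (g a))
    (hfg : Injective fun a => (f a, g a)) :
    ∑ᶠ a ∈ support μ, law μ f (f a) * law μ g (g a) / law μ (k₁ ∘ f) (k₁ (f a)) ≤ 1 := by
  classical
  set S := hμ.support_finite.toFinset
  have hS : support μ ⊆ S := by simp [S]
  rw [finsum_mem_eq_finite_toFinset_sum _ hμ.support_finite]
  have hfib : ∀ w, ∑ c ∈ S.image g with k₂ c = w, law μ g c = law μ (k₁ ∘ f) w := fun w => by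
    rw [show k₁ ∘ f = k₂ ∘ g from funext hk, law_comp hμ.support_finite]
    convert (law_apply_eq_sum (support_law_subset hS g) k₂ w).symm
  set Pf := law μ f
  set Pg := law μ g
  set Pk := law μ (k₁ ∘ f)
  set R : β × γ → ℝ := fun x => if k₂ x.2 = k₁ x.1 then Pf x.1 * Pg x.2 / Pk (k₁ x.1) else 0
  have hR : ∀ a, Pf (f a) * Pg (g a) / Pk (k₁ (f a)) = R (f a, g a) := by simp [R, hk]
  have hRnn : ∀ x, 0 ≤ R x := fun x => by
    dsimp only [R]
    split_ifs
    exacts [div_nonneg (mul_nonneg ((hμ.law f).nonneg _) ((hμ.law g).nonneg _))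
      ((hμ.law _).nonneg _), le_rfl]
  -- by injectivity of `(f, g)` the sum runs over pairs `(b, c)` with `k₁ b = k₂ c`; summing out
  -- `c` turns `Pg` into `Pk`
  calc ∑ a ∈ S, Pf (f a) * Pg (g a) / Pk (k₁ (f a))
      = ∑ x ∈ S.image fun a => (f a, g a), R x := by
        rw [sum_image hfg.injOn]
        exact sum_congr rfl fun a _ => hR a
    _ ≤ ∑ x ∈ S.image f ×ˢ S.image g, R x := by
        refine sum_le_sum_of_subset_of_nonneg (fun x hx => ?_) fun x _ _ => hRnn x
        obtain ⟨a, ha, rfl⟩ := mem_image.mp hx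
        exact mem_product.mpr ⟨mem_image_of_mem f ha, mem_image_of_mem g ha⟩
    _ = ∑ b ∈ S.image f, Pf b / Pk (k₁ b) * ∑ c ∈ S.image g with k₂ c = k₁ b, Pg c := by
        rw [sum_product]
        refine sum_congr rfl fun b _ => ?_
        rw [mul_sum, sum_filter]
        refine sum_congr rfl fun c _ => ?_
        dsimp only [R]
        split_ifs <;> ring
    _ = ∑ b ∈ S.image f, Pf b / Pk (k₁ b) * Pk (k₁ b) := by simp_rw [hfib]
    _ ≤ ∑ b ∈ S.image f, Pf b := by
        refine sum_le_sum fun b _ => ?_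
        rcases eq_or_ne (Pk (k₁ b)) 0 with h | h
        · rw [h, mul_zero]
          exact (hμ.law f).nonneg b
        · rw [div_mul_cancel₀ _ h]
    _ = 1 := (hμ.law f).sum_eq_one (support_law_subset hS f)

theorem ent_submodular (hμ : IsPMF μ) (hk : ∀ a, k₁ (f a) = k₂ (g a))
    (hfg : Injective fun a => (f a, g a)) :
    ent μ + ent (law μ (k₁ ∘ f)) ≤ ent (law μ f) + ent (law μ g) := by
  set S := hμ.support_finite.toFinset
  have hS : support μ ⊆ S := by simp [S]
  have hpos : ∀ a, 0 < μ a → 0 < law μ f (f a) ∧ 0 < law μ g (g a) ∧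
      0 < law μ (k₁ ∘ f) (k₁ (f a)) := fun a ha =>
    ⟨ha.trans_le (le_law_apply hμ f a), ha.trans_le (le_law_apply hμ g a),
      ha.trans_le (le_law_apply hμ (k₁ ∘ f) a)⟩
  have hlog : ∀ a ∈ S, μ a * log (law μ f (f a) * law μ g (g a) / law μ (k₁ ∘ f) (k₁ (f a)))
      = μ a * log (law μ f (f a)) + μ a * log (law μ g (g a))
        - μ a * log (law μ (k₁ ∘ f) ((k₁ ∘ f) a)) := by
    intro a ha
    obtain ⟨hPf, hPg, hPk⟩ := hpos a ((hμ.nonneg a).lt_of_ne' (by simpa [S] using ha))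
    rw [log_div (mul_pos hPf hPg).ne' hPk.ne', log_mul hPf.ne' hPg.ne', comp_apply]
    ring
  have hgibbs := ent_le_neg_finsum_mul_log hμ
    (fun a ha => div_pos (mul_pos (hpos a ha).1 (hpos a ha).2.1) (hpos a ha).2.2)
    (finsum_law_mul_law_div_law_le_one k₁ k₂ hμ hk hfg)
  rw [ent_law hμ.support_finite, ent_law hμ.support_finite, ent_law hμ.support_finite]
  rw [finsum_mul_eq_sum hS, sum_congr rfl hlog] at hgibbs
  simp only [finsum_mul_eq_sum hS]
  rw [sum_sub_distrib, sum_add_distrib] at hgibbs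
  linarith

end Submodular

theorem ent_subadditive {μ : α → ℝ} (hμ : IsPMF μ) {f : α → β} {g : α → γ}
    (hfg : Injective fun a => (f a, g a)) : ent μ ≤ ent (law μ f) + ent (law μ g) := by
  have h := ent_submodular (fun _ => ()) (fun _ => ()) hμ (fun _ => rfl) hfg
  rwa [comp_def, ent_law_const hμ.finsum_eq_one, add_zero] at h

end Law

section Product

variable {α β γ δ : Type*}

def pmfProd (p : α → ℝ) (q : β → ℝ) : α × β → ℝ := fun t => p t.1 * q t.2

theorem support_pmfProd_subset (p : α → ℝ) (q : β → ℝ) :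
    support (pmfProd p q) ⊆ support p ×ˢ support q := fun _ ht =>
  ⟨left_ne_zero_of_mul ht, right_ne_zero_of_mul ht⟩

theorem sum_pmfProd {p : α → ℝ} {q : β → ℝ} (A : Finset α) (B : Finset β) :
    ∑ t ∈ A ×ˢ B, pmfProd p q t = (∑ a ∈ A, p a) * ∑ b ∈ B, q b := by
  rw [sum_product, sum_mul_sum]
  rfl

theorem finite_support_pmfProd {p : α → ℝ} {q : β → ℝ} (hp : (support p).Finite)
    (hq : (support q).Finite) : (support (pmfProd p q)).Finite :=
  (hp.prod hq).subset (support_pmfProd_subset p q)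

theorem IsPMF.pmfProd {p : α → ℝ} {q : β → ℝ} (hp : IsPMF p) (hq : IsPMF q) :
    IsPMF (pmfProd p q) := by
  have hS := support_pmfProd_subset p q
  refine ⟨fun t => mul_nonneg (hp.nonneg _) (hq.nonneg _),
    finite_support_pmfProd hp.support_finite hq.support_finite, ?_⟩
  rw [finsum_eq_sum_of_support_subset _ (s := hp.support_finite.toFinset ×ˢ
    hq.support_finite.toFinset) (by simpa using hS), sum_pmfProd,
    hp.sum_eq_one (by simp), hq.sum_eq_one (by simp), one_mul]

theorem ent_pmfProd {p : α → ℝ} {q : β → ℝ} (hp : IsPMF p) (hq : IsPMF q) :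
    ent (pmfProd p q) = ent p + ent q := by
  set A := hp.support_finite.toFinset
  set B := hq.support_finite.toFinset
  have hA : support p ⊆ A := by simp [A]
  have hB : support q ⊆ B := by simp [B]
  rw [ent_eq_sum (S := A ×ˢ B) (by simpa [A, B] using support_pmfProd_subset p q),
    ent_eq_sum hA, ent_eq_sum hB, sum_product]
  simp only [pmfProd, negMulLog_mul, sum_add_distrib, ← mul_sum, ← sum_mul,
    hp.sum_eq_one hA, hq.sum_eq_one hB, one_mul]

theorem law_pmfProd_map {p : α → ℝ} {q : β → ℝ} (hp : (support p).Finite)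
    (hq : (support q).Finite) (f : α → γ) (g : β → δ) :
    law (pmfProd p q) (Prod.map f g) = pmfProd (law p f) (law q g) := by
  classical
  set A := hp.toFinset
  set B := hq.toFinset
  have hA : support p ⊆ A := by simp [A]
  have hB : support q ⊆ B := by simp [B]
  ext ⟨c, d⟩
  rw [law_apply_eq_sum (S := A ×ˢ B) (by simpa [A, B] using support_pmfProd_subset p q)]
  have h : (A ×ˢ B).filter (fun t => Prod.map f g t = (c, d))
      = A.filter (f · = c) ×ˢ B.filter (g · = d) := by
    ext ⟨x, y⟩
    simp [and_and_and_comm]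
  rw [h, sum_pmfProd]
  exact congrArg₂ (· * ·) (law_apply_eq_sum hA f c).symm (law_apply_eq_sum hB g d).symm

theorem law_pmfProd_fst (p : α → ℝ) {q : β → ℝ} (hq : ∑ᶠ b, q b = 1) :
    law (pmfProd p q) Prod.fst = p := by
  ext a
  have h : Prod.fst ⁻¹' {a} = Set.range (Prod.mk a : β → α × β) := by
    ext ⟨x, y⟩
    simp [eq_comm]
  rw [law, h, finsum_mem_range (Prod.mk_right_injective a)]
  simp only [pmfProd, ← mul_finsum, hq, mul_one]

theorem law_pmfProd_snd {p : α → ℝ} (hp : ∑ᶠ a, p a = 1) (q : β → ℝ) :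
    law (pmfProd p q) Prod.snd = q := by
  ext b
  have h : Prod.snd ⁻¹' {b} = Set.range (fun a => (a, b) : α → α × β) := by
    ext ⟨x, y⟩
    simp [eq_comm]
  rw [law, h, finsum_mem_range (Prod.mk_left_injective b)]
  simp only [pmfProd, ← finsum_mul, hp, one_mul]

theorem law_pmfProd_prodAssoc (p : α → ℝ) (q : β → ℝ) (r : γ → ℝ) :
    law (pmfProd p (pmfProd q r)) (Equiv.prodAssoc α β γ).symm = pmfProd (pmfProd p q) r := by
  rw [law_equiv]
  ext ⟨⟨a, b⟩, c⟩
  simp [pmfProd, mul_assoc]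

end Product

section AddCommGroup

variable {G : Type*} [AddCommGroup G] {p q r : G → ℝ}

theorem law_pmfProd_add (p q : G → ℝ) : law (pmfProd p q) (fun t => t.1 + t.2) = conv p q := by
  ext w
  have h : (fun t : G × G => t.1 + t.2) ⁻¹' {w} = Set.range fun x => (x, w - x) := by
    ext ⟨x, y⟩
    simp [eq_comm, eq_sub_iff_add_eq']
  rw [law, h, finsum_mem_range fun x y hxy => congrArg Prod.fst hxy]
  rfl

theorem law_pmfProd_sub (p q : G → ℝ) :
    law (pmfProd p q) (fun t => t.1 - t.2) = conv p (negp q) := by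
  ext w
  have h : (fun t : G × G => t.1 - t.2) ⁻¹' {w} = Set.range fun x => (x, x - w) := by
    ext ⟨x, y⟩
    simp only [Set.mem_preimage, Set.mem_singleton_iff, Set.mem_range, Prod.mk.injEq]
    constructor
    · rintro rfl
      exact ⟨x, rfl, sub_sub_cancel x y⟩
    · rintro ⟨z, rfl, rfl⟩
      exact sub_sub_cancel z w
  rw [law, h, finsum_mem_range fun x y hxy => congrArg Prod.fst hxy]
  simp [pmfProd, conv, negp]

theorem conv_comm (p q : G → ℝ) : conv p q = conv q p := by
  ext w
  rw [conv, conv, ← finsum_comp_equiv (Equiv.subLeft w)]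
  simp [mul_comm]

theorem negp_negp (p : G → ℝ) : negp (negp p) = p := by
  ext x
  simp [negp]

theorem ent_negp (p : G → ℝ) : ent (negp p) = ent p :=
  finsum_comp_equiv (Equiv.neg G) (f := fun x => -(p x * log (p x)))

theorem negp_conv (p q : G → ℝ) : negp (conv p q) = conv (negp p) (negp q) := by
  ext w
  rw [negp, conv, conv, ← finsum_comp_equiv (Equiv.neg G)]
  simp [negp, sub_eq_add_neg, add_comm]

theorem law_neg (p : G → ℝ) : law p Neg.neg = negp p := by
  have h := law_equiv p (Equiv.neg G)
  rw [Equiv.neg_symm] at h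
  exact h

theorem IsPMF.negp (hp : IsPMF p) : IsPMF (negp p) :=
  law_neg p ▸ hp.law _

theorem IsPMF.conv (hp : IsPMF p) (hq : IsPMF q) : IsPMF (conv p q) :=
  law_pmfProd_add p q ▸ (hp.pmfProd hq).law _

theorem law_pmfProd_add_left (hp : (support p).Finite) (hq : (support q).Finite)
    (hr : (support r).Finite) :
    law (pmfProd p (pmfProd q r)) (fun t => (t.1 + t.2.1, t.2.2)) = pmfProd (conv p q) r := by
  rw [show (fun t : G × G × G => (t.1 + t.2.1, t.2.2))
      = Prod.map (fun s => s.1 + s.2) id ∘ (Equiv.prodAssoc G G G).symm from rfl,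
    law_comp (finite_support_pmfProd hp (finite_support_pmfProd hq hr)), law_pmfProd_prodAssoc,
    law_pmfProd_map (finite_support_pmfProd hp hq) hr, law_pmfProd_add, law_id]

theorem law_pmfProd_add_right (hp : (support p).Finite) (hq : (support q).Finite)
    (hr : (support r).Finite) :
    law (pmfProd p (pmfProd q r)) (fun t => (t.1, t.2.1 + t.2.2)) = pmfProd p (conv q r) := by
  rw [show (fun t : G × G × G => (t.1, t.2.1 + t.2.2)) = Prod.map id fun s => s.1 + s.2 from rfl,
    law_pmfProd_map hp (finite_support_pmfProd hq hr), law_id, law_pmfProd_add]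

theorem conv_assoc (hp : (support p).Finite) (hq : (support q).Finite)
    (hr : (support r).Finite) : conv (conv p q) r = conv p (conv q r) := by
  have hμ := finite_support_pmfProd hp (finite_support_pmfProd hq hr)
  rw [← law_pmfProd_add (conv p q) r, ← law_pmfProd_add p (conv q r),
    ← law_pmfProd_add_left hp hq hr, ← law_pmfProd_add_right hp hq hr, ← law_comp hμ,
    ← law_comp hμ]
  congr 1
  ext t
  exact add_assoc _ _ _

theorem ent_le_ent_conv (hp : IsPMF p) (hq : IsPMF q) : ent p ≤ ent (conv p q) := by
  have h := ent_subadditive (hp.pmfProd hq) (f := fun t => t.1 + t.2) (g := Prod.snd)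
    fun s t hst => by
      simp only [Prod.mk.injEq] at hst
      ext
      · simpa [hst.2] using hst.1
      · exact hst.2
  rw [ent_pmfProd hp hq, law_pmfProd_add, law_pmfProd_snd hp.finsum_eq_one] at h
  linarith

theorem ent_conv_conv_add_ent_le (hp : IsPMF p) (hq : IsPMF q) (hr : IsPMF r) :
    ent (conv (conv p q) r) + ent q ≤ ent (conv p q) + ent (conv q r) := by
  have h := ent_submodular (f := fun t : G × G × G => (t.1 + t.2.1, t.2.2))
    (g := fun t => (t.1, t.2.1 + t.2.2)) (fun s => s.1 + s.2) (fun s => s.1 + s.2)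
    (hp.pmfProd (hq.pmfProd hr)) (fun t => add_assoc _ _ _) fun s t hst => by
      simp only [Prod.mk.injEq] at hst
      obtain ⟨⟨hxy, hz⟩, hx, -⟩ := hst
      ext
      · exact hx
      · simpa [hx] using hxy
      · exact hz
  rw [law_comp (hp.pmfProd (hq.pmfProd hr)).support_finite,
    law_pmfProd_add_left hp.support_finite hq.support_finite hr.support_finite, law_pmfProd_add,
    law_pmfProd_add_right hp.support_finite hq.support_finite hr.support_finite,
    ent_pmfProd hp (hq.pmfProd hr), ent_pmfProd hq hr, ent_pmfProd (hp.conv hq) hr,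
    ent_pmfProd hp (hq.conv hr)] at h
  linarith

theorem ent_conv_negp_add_ent_le (hp : IsPMF p) (hq : IsPMF q) (hr : IsPMF r) :
    ent (conv p (negp r)) + ent q ≤ ent (conv p (negp q)) + ent (conv q (negp r)) := by
  set μ := pmfProd p (pmfProd q r)
  have hμ : IsPMF μ := hp.pmfProd (hq.pmfProd hr)
  set g : G × G × G → G × G := fun t => (t.1 - t.2.1, t.2.1 - t.2.2)
  have hsub := ent_submodular (f := fun t : G × G × G => (t.1, t.2.2)) (g := g)
    (fun s => s.1 - s.2) (fun s => s.1 + s.2) hμ (fun t => (sub_add_sub_cancel _ _ _).symm)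
    fun s t hst => by
      simp only [g, Prod.mk.injEq] at hst
      obtain ⟨⟨hx, hz⟩, hxy, -⟩ := hst
      ext
      · exact hx
      · simpa [hx] using hxy
      · exact hz
  have hadd := ent_subadditive (hμ.law g) (f := Prod.fst) (g := Prod.snd) fun _ _ h => h
  have hf : law μ (fun t => (t.1, t.2.2)) = pmfProd p r := by
    rw [show (fun t : G × G × G => (t.1, t.2.2)) = Prod.map id Prod.snd from rfl,
      law_pmfProd_map hp.support_finite (hq.pmfProd hr).support_finite, law_id,
      law_pmfProd_snd hq.finsum_eq_one]
  have hg₁ : law (law μ g) Prod.fst = conv p (negp q) := by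
    rw [← law_comp hμ.support_finite, show Prod.fst ∘ g
        = (fun s => s.1 - s.2) ∘ Prod.map id Prod.fst from rfl, law_comp hμ.support_finite,
      law_pmfProd_map hp.support_finite (hq.pmfProd hr).support_finite, law_id,
      law_pmfProd_fst q hr.finsum_eq_one, law_pmfProd_sub]
  have hg₂ : law (law μ g) Prod.snd = conv q (negp r) := by
    rw [← law_comp hμ.support_finite,
      show Prod.snd ∘ g = (fun s => s.1 - s.2) ∘ Prod.snd from rfl, law_comp hμ.support_finite,
      law_pmfProd_snd hp.finsum_eq_one, law_pmfProd_sub]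
  rw [law_comp hμ.support_finite, hf, law_pmfProd_sub, ent_pmfProd hp (hq.pmfProd hr),
    ent_pmfProd hq hr, ent_pmfProd hp hr] at hsub
  rw [hg₁, hg₂] at hadd
  linarith

theorem rdist_comm (p q : G → ℝ) : rdist p q = rdist q p := by
  rw [rdist, rdist, ← ent_negp (conv p (negp q)), negp_conv, negp_negp, conv_comm]
  ring

theorem rdist_triangle (hp : IsPMF p) (hq : IsPMF q) (hr : IsPMF r) :
    rdist p r ≤ rdist p q + rdist q r := by
  have := ent_conv_negp_add_ent_le hp hq hr
  simp only [rdist]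
  linarith

end AddCommGroup

/-- `d[X; -Y] ≤ 3 d[X;Y]`. -/
theorem rdist_neg_le_three_rdist {G : Type*} [AddCommGroup G] (p q : G → ℝ)
    (hp : IsPMF p) (hq : IsPMF q) :
    rdist p (negp q) ≤ 3 * rdist p q := by
  have hq' := hq.negp
  have h₁ : ent (conv p q) ≤ ent (conv (conv p (negp q)) q) := by
    rw [conv_assoc hp.support_finite hq'.support_finite hq.support_finite, conv_comm (negp q),
      ← conv_assoc hp.support_finite hq.support_finite hq'.support_finite]
    exact ent_le_ent_conv (hp.conv hq) hq'
  have h₂ := ent_conv_conv_add_ent_le hp hq' hq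
  have h₃ := rdist_triangle hq hp hq
  rw [rdist_comm q p] at h₃
  rw [ent_negp, conv_comm (negp q)] at h₂
  simp only [rdist, negp_negp, ent_negp] at h₃ ⊢
  linarith
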